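/- arXiv:1401.6063 — 3 statements merged into one kernel-verified Lean document; each statement's English description precedes it below -/
import Mathlib

section
/- Let S be a finite nonempty set, l a positive integer, γ ∈ [0,1], and f : S^l → [0,1]. Suppose that for every probability distribution q on S which is a type of a length-l sequence over S (i.e., there exists t^l ∈ S^l such that q(s) = N(s|t^l)/l for every s ∈ S, where N(s|t^l) denotes the number of occurrences of s in t^l), one has ∑_{s^l ∈ S^l} f(s^l) · q(s_1)·…·q(s_l) ≥ 1 − γ. Then for every s^l ∈ S^l, (1/l!) · ∑_{σ ∈ Sym(l)} f(σ(s^l)) ≥ 1 − (l+1)^{|S|} · γ, where σ(s^l) := (s_{σ(1)}, …, s_{σ(l)}). -/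
/-!
Let `q` be the type of `s` and `F` the average of `f` over the permutations of its argument.
Since `q^{⊗l}` is permutation invariant, `F` has the same `q^{⊗l}`-expectation as `f`, at least
`1 - γ`. As `F ≤ 1` and `F` is constant, equal to `F s`, on the type class `T` of `s`, this gives
`q^{⊗l}(T) (1 - F s) ≤ γ`. Finally `q^{⊗l}(T) ≥ (l+1)^{-|S|}`: there are at most `(l+1)^{|S|}`
type classes, and `T` is the most likely one, because the multinomial weights
`l! ∏ₐ q(a)^{mₐ} / mₐ!` are maximised at `m = l q`, as `n^m / m!` is maximal at `m = n`.
-/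

open Finset Equiv
open scoped Nat

lemma Nat.factorial_mul_pow_le_factorial_mul_pow_self (n m : ℕ) : n ! * n ^ m ≤ m ! * n ^ n := by
  rcases le_total n m with h | h
  · calc n ! * n ^ m = n ! * n ^ (m - n) * n ^ n := by
          rw [mul_assoc, ← pow_add, Nat.sub_add_cancel h]
      _ ≤ m ! * n ^ n := Nat.mul_le_mul_right _ (Nat.factorial_mul_pow_sub_le_factorial h)
  · calc n ! * n ^ m = m ! * n.descFactorial (n - m) * n ^ m := by
          rw [← Nat.factorial_mul_descFactorial (Nat.sub_le n m), Nat.sub_sub_self h]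
      _ ≤ m ! * n ^ (n - m) * n ^ m := by gcongr; exact Nat.descFactorial_le_pow n _
      _ = m ! * n ^ n := by rw [mul_assoc, ← pow_add, Nat.sub_add_cancel h]

lemma pow_div_factorial_le_pow_self_div_factorial (n m : ℕ) :
    (n : ℝ) ^ m / m ! ≤ (n : ℝ) ^ n / n ! := by
  rw [div_le_div_iff₀ (by positivity) (by positivity)]
  exact_mod_cast (mul_comm _ _).trans_le
    ((Nat.factorial_mul_pow_le_factorial_mul_pow_self n m).trans_eq (mul_comm _ _))

lemma Finset.sum_mul_le_one_sub_mul_sum {α : Type*} [Fintype α] {F w : α → ℝ} {T : Finset α}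
    {c : ℝ} (hw : ∀ x, 0 ≤ w x) (hw_sum : ∑ x, w x = 1) (hF : ∀ x, F x ≤ 1)
    (hT : ∀ x ∈ T, F x = c) :
    ∑ x, F x * w x ≤ 1 - (1 - c) * ∑ x ∈ T, w x := by
  have hT_sum : ∑ x ∈ T, (1 - F x) * w x = (1 - c) * ∑ x ∈ T, w x := by
    rw [mul_sum]; exact sum_congr rfl fun x hx => by rw [hT x hx]
  have hT_le : ∑ x ∈ T, (1 - F x) * w x ≤ ∑ x, (1 - F x) * w x :=
    sum_le_univ_sum_of_nonneg fun x => mul_nonneg (sub_nonneg.mpr (hF x)) (hw x)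
  have h_univ : ∑ x, (1 - F x) * w x = 1 - ∑ x, F x * w x := by
    simp only [sub_mul, one_mul, sum_sub_distrib, hw_sum]
  linarith

namespace Robustification

section TypeClass

variable {ι S : Type*} [Fintype ι] [DecidableEq S]

def occurrences (t : ι → S) (a : S) : ℕ := #{i | t i = a}

lemma sum_occurrences [Fintype S] (t : ι → S) : ∑ a, occurrences t a = Fintype.card ι :=
  (card_eq_sum_card_fiberwise fun i _ => mem_univ (t i)).symm

lemma occurrences_le_card (t : ι → S) (a : S) : occurrences t a ≤ Fintype.card ι :=
  card_filter_le _ _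

lemma prod_comp_eq_prod_pow_occurrences [Fintype S] {M : Type*} [CommMonoid M] (g : S → M)
    (t : ι → S) : ∏ i, g (t i) = ∏ a, g a ^ occurrences t a := by
  rw [← prod_fiberwise univ t fun i => g (t i)]
  refine prod_congr rfl fun a _ => ?_
  rw [prod_congr rfl fun i hi => by rw [(mem_filter.mp hi).2], prod_const]
  rfl

lemma occurrences_comp_perm (t : ι → S) (σ : Perm ι) : occurrences (t ∘ σ) = occurrences t := by
  funext a
  exact card_bij' (fun i _ => σ i) (fun i _ => σ.symm i) (by simp) (by simp) (by simp) (by simp)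

lemma exists_perm_comp_eq_of_occurrences_eq {t u : ι → S}
    (h : occurrences t = occurrences u) : ∃ σ : Perm ι, t ∘ σ = u := by
  have e : ∀ a, {i // u i = a} ≃ {i // t i = a} := fun a =>
    Fintype.equivOfCardEq (by simp only [Fintype.card_subtype]; exact (congrFun h a).symm)
  refine ⟨((sigmaFiberEquiv u).symm.trans (sigmaCongrRight e)).trans (sigmaFiberEquiv t), ?_⟩
  funext i
  exact (e (u i) ⟨i, rfl⟩).2

lemma mem_orbit_iff_occurrences_eq {t u : ι → S} :
    u ∈ MulAction.orbit (Perm ι)ᵈᵐᵃ t ↔ occurrences u = occurrences t := by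
  constructor
  · rintro ⟨σ, rfl⟩
    exact occurrences_comp_perm t _
  · intro h
    obtain ⟨σ, hσ⟩ := exists_perm_comp_eq_of_occurrences_eq h.symm
    exact ⟨DomMulAct.mk σ, hσ⟩

noncomputable def empirical (t : ι → S) (a : S) : ℝ := occurrences t a / Fintype.card ι

lemma empirical_nonneg (t : ι → S) (a : S) : 0 ≤ empirical t a := by
  unfold empirical; positivity

lemma sum_empirical [Fintype S] [Nonempty ι] (t : ι → S) : ∑ a, empirical t a = 1 := by
  simp only [empirical]
  rw [← sum_div, ← Nat.cast_sum, sum_occurrences]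
  exact div_self (by positivity)

variable [DecidableEq ι] [Fintype S]

def typeClass (t : ι → S) : Finset (ι → S) := {u | occurrences u = occurrences t}

/-- Orbit–stabilizer for the action `σ • t = t ∘ σ⁻¹` of `Perm ι` on `ι → S`. -/
lemma card_typeClass_mul_prod_factorial (t : ι → S) :
    #(typeClass t) * ∏ a, (occurrences t a)! = (Fintype.card ι)! := by
  have horbit : MulAction.orbit (Perm ι)ᵈᵐᵃ t = typeClass t := by
    ext u; simp [typeClass, mem_orbit_iff_occurrences_eq]
  have hstab : Nat.card (MulAction.stabilizer (Perm ι)ᵈᵐᵃ t) = ∏ a, (occurrences t a)! := by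
    refine (Nat.card_congr (DomMulAct.mk.symm.subtypeEquiv
      (p := (· ∈ MulAction.stabilizer (Perm ι)ᵈᵐᵃ t)) (q := fun g : Perm ι => t ∘ g = t)
      fun _ => DomMulAct.mem_stabilizer_iff)).trans ?_
    rw [Nat.card_eq_fintype_card, DomMulAct.stabilizer_card]
    simp only [occurrences, Fintype.card_subtype]
  rw [← Set.ncard_coe_finset, ← horbit, ← MulAction.index_stabilizer, ← hstab,
    Subgroup.index_mul_card, ← Nat.card_congr DomMulAct.mk, Nat.card_perm,
    Nat.card_eq_fintype_card]

lemma card_image_occurrences_le :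
    #((univ : Finset (ι → S)).image occurrences) ≤ (Fintype.card ι + 1) ^ Fintype.card S := by
  calc #((univ : Finset (ι → S)).image occurrences)
      ≤ #(Fintype.piFinset fun _ : S => range (Fintype.card ι + 1)) := by
        refine card_le_card fun N hN => ?_
        obtain ⟨t, -, rfl⟩ := mem_image.mp hN
        simpa [Nat.lt_succ_iff] using occurrences_le_card t
    _ = (Fintype.card ι + 1) ^ Fintype.card S := by simp

lemma sum_typeClass_prod (q : S → ℝ) (t : ι → S) :
    ∑ u ∈ typeClass t, ∏ i, q (u i) =
      (Fintype.card ι)! * ∏ a, q a ^ occurrences t a / (occurrences t a)! := by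
  have hcard : (#(typeClass t) : ℝ) = (Fintype.card ι)! / ∏ a, ((occurrences t a)! : ℝ) := by
    rw [eq_div_iff (by positivity)]
    exact_mod_cast card_typeClass_mul_prod_factorial t
  rw [sum_congr rfl fun u hu => by
      rw [prod_comp_eq_prod_pow_occurrences, (mem_filter.mp hu).2],
    sum_const, nsmul_eq_mul, hcard, prod_div_distrib]
  ring

lemma sum_prod_empirical (t : ι → S) : ∑ u : ι → S, ∏ i, empirical t (u i) = 1 := by
  rw [← Fintype.prod_sum fun (_ : ι) a => empirical t a, prod_const]
  rcases isEmpty_or_nonempty ι with hι | hι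
  · simp
  · rw [sum_empirical t, one_pow]

lemma sum_typeClass_prod_empirical_le (t u : ι → S) :
    ∑ v ∈ typeClass u, ∏ i, empirical t (v i) ≤ ∑ v ∈ typeClass t, ∏ i, empirical t (v i) := by
  have hscale : ∀ K : S → ℕ, ∑ a, K a = Fintype.card ι →
      ∏ a, empirical t a ^ K a / (K a)! =
        (∏ a, (occurrences t a : ℝ) ^ K a / (K a)!) / (Fintype.card ι : ℝ) ^ Fintype.card ι := by
    intro K hK
    simp only [empirical, div_pow, prod_div_distrib, prod_pow_eq_pow_sum, hK]
    exact div_right_comm _ _ _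
  rw [sum_typeClass_prod, sum_typeClass_prod, hscale _ (sum_occurrences u),
    hscale _ (sum_occurrences t)]
  gcongr _ * (?_ / _)
  exact prod_le_prod (fun a _ => by positivity)
    fun a _ => pow_div_factorial_le_pow_self_div_factorial _ _

lemma one_div_le_sum_typeClass_prod_empirical (t : ι → S) :
    1 / ((Fintype.card ι : ℝ) + 1) ^ Fintype.card S ≤
      ∑ v ∈ typeClass t, ∏ i, empirical t (v i) := by
  set P := ∑ v ∈ typeClass t, ∏ i, empirical t (v i)
  have hP : 1 ≤ ((Fintype.card ι : ℝ) + 1) ^ Fintype.card S * P := calc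
    1 = ∑ v : ι → S, ∏ i, empirical t (v i) := (sum_prod_empirical t).symm
    _ = ∑ N ∈ univ.image occurrences, ∑ v with occurrences v = N, ∏ i, empirical t (v i) :=
        (sum_fiberwise_of_maps_to (fun v _ => mem_image_of_mem _ (mem_univ v)) _).symm
    _ ≤ ∑ _N ∈ (univ : Finset (ι → S)).image occurrences, P := sum_le_sum fun N hN => by
        obtain ⟨u, -, rfl⟩ := mem_image.mp hN
        exact sum_typeClass_prod_empirical_le t u
    _ = #((univ : Finset (ι → S)).image occurrences) * P := by rw [sum_const, nsmul_eq_mul]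
    _ ≤ ((Fintype.card ι : ℝ) + 1) ^ Fintype.card S * P := by
        gcongr
        · exact sum_nonneg fun v _ => prod_nonneg fun i _ => empirical_nonneg t _
        · exact_mod_cast card_image_occurrences_le
  rwa [div_le_iff₀' (by positivity)]

end TypeClass

section Symmetrization

variable {ι S : Type*} [Fintype ι] [DecidableEq ι]

noncomputable def symmetrization (f : (ι → S) → ℝ) (t : ι → S) : ℝ :=
  1 / ((Fintype.card ι)! : ℝ) * ∑ σ : Perm ι, f (t ∘ σ)

lemma symmetrization_le_one {f : (ι → S) → ℝ} (hf : ∀ u, f u ≤ 1) (t : ι → S) :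
    symmetrization f t ≤ 1 := by
  have hsum : ∑ σ : Perm ι, f (t ∘ σ) ≤ (Fintype.card ι)! := by
    simpa [Fintype.card_perm] using
      sum_le_card_nsmul univ (fun σ : Perm ι => f (t ∘ σ)) 1 fun σ _ => hf (t ∘ σ)
  rw [symmetrization, one_div_mul_eq_div, div_le_one (by positivity)]
  exact hsum

lemma symmetrization_comp_perm (f : (ι → S) → ℝ) (t : ι → S) (σ : Perm ι) :
    symmetrization f (t ∘ σ) = symmetrization f t := by
  rw [symmetrization, symmetrization]
  congr 1
  exact Fintype.sum_equiv (Equiv.mulLeft σ) _ _ fun τ => rfl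

lemma symmetrization_eq_of_mem_typeClass [Fintype S] [DecidableEq S] (f : (ι → S) → ℝ)
    {t u : ι → S} (hu : u ∈ typeClass t) : symmetrization f u = symmetrization f t := by
  obtain ⟨σ, rfl⟩ := exists_perm_comp_eq_of_occurrences_eq (mem_filter.mp hu).2.symm
  exact symmetrization_comp_perm f t σ

lemma sum_symmetrization_mul_prod [Fintype S] (f : (ι → S) → ℝ) (q : S → ℝ) :
    ∑ t, symmetrization f t * ∏ i, q (t i) = ∑ t, f t * ∏ i, q (t i) := by
  have hperm : ∀ σ : Perm ι, ∑ t, f (t ∘ σ) * ∏ i, q (t i) = ∑ t, f t * ∏ i, q (t i) :=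
    fun σ => Fintype.sum_equiv (σ.symm.arrowCongr (Equiv.refl S)) _ _ fun t =>
      congrArg (f (t ∘ σ) * ·) (Equiv.prod_comp σ fun i => q (t i)).symm
  simp only [symmetrization, mul_assoc, sum_mul, ← mul_sum]
  rw [sum_comm, sum_congr rfl fun σ _ => hperm σ, sum_const, card_univ, Fintype.card_perm,
    nsmul_eq_mul, ← mul_assoc, one_div_mul_cancel (by positivity), one_mul]

end Symmetrization

theorem one_sub_mul_le_symmetrization {ι S : Type*} [Fintype ι] [DecidableEq ι] [Fintype S]
    [DecidableEq S] {f : (ι → S) → ℝ} (hf : ∀ u, f u ≤ 1) {γ : ℝ} {t : ι → S}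
    (h : 1 - γ ≤ ∑ u, f u * ∏ i, empirical t (u i)) :
    1 - ((Fintype.card ι : ℝ) + 1) ^ Fintype.card S * γ ≤ symmetrization f t := by
  set F := symmetrization f t
  set P := ∑ u ∈ typeClass t, ∏ i, empirical t (u i)
  set C := ((Fintype.card ι : ℝ) + 1) ^ Fintype.card S
  have hbound : 1 - γ ≤ 1 - (1 - F) * P := by
    rw [← sum_symmetrization_mul_prod] at h
    exact h.trans (sum_mul_le_one_sub_mul_sum
      (fun u => prod_nonneg fun i _ => empirical_nonneg t (u i)) (sum_prod_empirical t)
      (symmetrization_le_one hf) fun u hu => symmetrization_eq_of_mem_typeClass f hu)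
  have hCP : 1 ≤ C * P := (div_le_iff₀' (by positivity)).mp
    (one_div_le_sum_typeClass_prod_empirical t)
  have hF : 0 ≤ 1 - F := sub_nonneg.mpr (symmetrization_le_one hf t)
  suffices 1 - F ≤ C * γ by linarith
  calc 1 - F ≤ (1 - F) * (C * P) := le_mul_of_one_le_right hF hCP
    _ = C * ((1 - F) * P) := by ring
    _ ≤ C * γ := by gcongr; linarith

end Robustification

theorem robustification_technique_general
    {S : Type*} [Fintype S] [DecidableEq S] {l : ℕ}
    (γ : ℝ)
    (f : (Fin l → S) → ℝ) (hf : ∀ s : Fin l → S, f s ∈ Set.Icc (0 : ℝ) 1)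
    (h : ∀ q : S → ℝ,
      (∃ t : Fin l → S, ∀ s : S,
        q s = ((Finset.univ.filter (fun i : Fin l => t i = s)).card : ℝ) / l) →
      1 - γ ≤ ∑ s : Fin l → S, f s * ∏ i : Fin l, q (s i)) :
    ∀ s : Fin l → S,
      1 - ((l : ℝ) + 1) ^ (Fintype.card S) * γ ≤
        (1 / (Nat.factorial l : ℝ)) * ∑ σ : Equiv.Perm (Fin l), f (s ∘ σ) := by
  intro s
  have := Robustification.one_sub_mul_le_symmetrization (t := s) (fun u => (hf u).2)
    (h _ ⟨s, fun a => by simp [Robustification.empirical, Robustification.occurrences]⟩)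
  simpa [Robustification.symmetrization] using this

/-- **Ahlswede's robustification technique.**
If a function `f : S^l → [0,1]` has expectation at least `1 - γ` under every
i.i.d. distribution `q^{⊗l}` where `q` is a type of a length-`l` sequence over `S`,
then for every `s^l ∈ S^l` the average of `f` over all permutations of `s^l` is at
least `1 - (l+1)^{|S|} γ`. -/
theorem robustification_technique
    {S : Type*} [Fintype S] [DecidableEq S] [Nonempty S] {l : ℕ} (hl : 0 < l)
    (γ : ℝ) (hγ : γ ∈ Set.Icc (0 : ℝ) 1)
    (f : (Fin l → S) → ℝ) (hf : ∀ s : Fin l → S, f s ∈ Set.Icc (0 : ℝ) 1)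
    (h : ∀ q : S → ℝ,
      (∃ t : Fin l → S, ∀ s : S,
        q s = ((Finset.univ.filter (fun i : Fin l => t i = s)).card : ℝ) / l) →
      1 - γ ≤ ∑ s : Fin l → S, f s * ∏ i : Fin l, q (s i)) :
    ∀ s : Fin l → S,
      1 - ((l : ℝ) + 1) ^ (Fintype.card S) * γ ≤
        (1 / (Nat.factorial l : ℝ)) * ∑ σ : Equiv.Perm (Fin l), f (s ∘ σ) :=
  robustification_technique_general γ f hf h
end

section
/- Let τ and X be n×n complex matrices such that τ is positive semidefinite with tr(τ) ≤ 1, and 0 ≤ X ≤ 1 (meaning both X and 1 − X are positive semidefinite), and let ε ∈ (0,1). If tr(τX) ≥ 1 − ε, then ‖√X · τ · √X − τ‖₁ ≤ 2√ε, where √X denotes the positive semidefinite square root of X. -/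
open ComplexOrder

/-- The positive semidefinite square root of a positive semidefinite matrix
(the definition removed from Mathlib, restored verbatim). -/
noncomputable def Matrix.PosSemidef.sqrt {n 𝕜 : Type*} [Fintype n] [RCLike 𝕜] [DecidableEq n]
    {A : Matrix n n 𝕜} (hA : A.PosSemidef) : Matrix n n 𝕜 :=
  hA.1.eigenvectorUnitary.1 * Matrix.diagonal ((↑) ∘ (√·) ∘ hA.1.eigenvalues) *
  (star hA.1.eigenvectorUnitary : Matrix n n 𝕜)

/-- The trace norm `‖M‖₁ = tr √(MᴴM)` of a complex square matrix. -/
noncomputable def traceNorm {n : ℕ} (M : Matrix (Fin n) (Fin n) ℂ) : ℝ :=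
  ((Matrix.posSemidef_conjTranspose_mul_self M).sqrt).trace.re

/-!
Write `S = √X`, so that `SτS - τ = Sτ(S - 1) + (S - 1)τ`. The trace norm of the Hermitian matrix
`SτS - τ` equals `tr (U (SτS - τ))` for the unitary `U = sign (SτS - τ)`, and the Cauchy–Schwarz
inequality for the semi-inner product `⟪A, B⟫ = tr (B τ Aᴴ)` bounds the two resulting terms by
`√tr(τX) √q` and `√q √tr τ`, where `q = tr (τ (1 - S)²)`. Since `(1 - √x)² ≤ 1 - x` on `[0, 1]`,
`q ≤ tr (τ (1 - X)) ≤ ε`.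
-/

open scoped MatrixOrder
open Matrix

section CFC

variable {A : Type*} [PartialOrder A] [Ring A] [StarRing A] [TopologicalSpace A]
  [StarOrderedRing A] [Algebra ℝ A] [ContinuousFunctionalCalculus ℝ A IsSelfAdjoint]
  [NonnegSpectrumClass ℝ A] [IsSemitopologicalRing A] [T2Space A]

lemma CFC.sq_one_sub_sqrt_le {a : A} (ha₀ : 0 ≤ a) (ha₁ : a ≤ 1) :
    (1 - CFC.sqrt a) ^ 2 ≤ 1 - a := by
  have hsq : (1 - CFC.sqrt a) ^ 2 = cfc (fun x : ℝ => (1 - √x) ^ 2) a := by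
    rw [CFC.sqrt_eq_real_sqrt a, cfcₙ_eq_cfc, cfc_pow .., cfc_sub .., cfc_const_one ℝ a]
  have hsub : 1 - a = cfc (fun x : ℝ => 1 - x) a := by
    rw [cfc_sub .., cfc_const_one ℝ a, cfc_id' ℝ a]
  rw [hsq, hsub, cfc_le_iff ..]
  intro x hx
  have hx₀ : 0 ≤ x := spectrum_nonneg_of_nonneg ha₀ hx
  have hx₁ : x ≤ 1 := (CFC.le_one_iff a).mp ha₁ x hx
  nlinarith [Real.sq_sqrt hx₀, Real.sqrt_le_one.mpr hx₁, Real.sqrt_nonneg x]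

end CFC

namespace Matrix

variable {n 𝕜 : Type*} [Fintype n] [RCLike 𝕜]

lemma PosSemidef.sqrt_eq_cfcSqrt [DecidableEq n] {A : Matrix n n 𝕜} (hA : A.PosSemidef) :
    hA.sqrt = CFC.sqrt A := by
  rw [CFC.sqrt_eq_cfc, cfc_nnreal_eq_real _ A hA.nonneg, hA.1.cfc_eq]
  simp only [IsHermitian.cfc, PosSemidef.sqrt, Unitary.conjStarAlgAut_apply]
  congr 2
  ext i j
  simp [diagonal_apply, hA.eigenvalues_nonneg i]

lemma PosSemidef.trace_mul_nonneg {A B : Matrix n n 𝕜} (hA : A.PosSemidef) (hB : B.PosSemidef) :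
    0 ≤ (A * B).trace := by
  classical
  obtain ⟨R, rfl⟩ := CStarAlgebra.nonneg_iff_eq_star_mul_self.mp hB.nonneg
  rw [← mul_assoc, trace_mul_comm, ← mul_assoc, star_eq_conjTranspose]
  exact (hA.mul_mul_conjTranspose_same R).trace_nonneg

lemma PosSemidef.trace_mul_le_trace_mul {M A B : Matrix n n 𝕜} (hM : M.PosSemidef) (hAB : A ≤ B) :
    (M * A).trace ≤ (M * B).trace := by
  rw [← sub_nonneg, ← trace_sub, ← mul_sub]
  exact hM.trace_mul_nonneg hAB

lemma PosSemidef.norm_trace_mul_mul_conjTranspose_le {M : Matrix n n 𝕜} (hM : M.PosSemidef)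
    (x y : Matrix n n 𝕜) :
    ‖(y * M * xᴴ).trace‖ ≤
      √(RCLike.re (x * M * xᴴ).trace) * √(RCLike.re (y * M * yᴴ).trace) := by
  let := M.toMatrixSeminormedAddCommGroup hM
  let := M.toMatrixInnerProductSpace hM
  have := norm_inner_le_norm (𝕜 := 𝕜) x y
  rwa [norm_eq_sqrt_re_inner (𝕜 := 𝕜) x, norm_eq_sqrt_re_inner (𝕜 := 𝕜) y] at this

lemma PosSemidef.norm_trace_mul_mul_le [DecidableEq n] {M U : Matrix n n 𝕜} (hM : M.PosSemidef)
    (hU : U ∈ unitaryGroup n 𝕜) (T B : Matrix n n 𝕜) :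
    ‖(U * T * M * B).trace‖ ≤
      √(RCLike.re (T * M * Tᴴ).trace) * √(RCLike.re (Bᴴ * M * B).trace) := by
  have hU' : Uᴴ * U = 1 := mem_unitaryGroup_iff'.mp hU
  have hUT : (U * T * M * (U * T)ᴴ).trace = (T * M * Tᴴ).trace := by
    rw [conjTranspose_mul, ← mul_assoc, trace_mul_comm, ← mul_assoc, ← mul_assoc, ← mul_assoc,
      hU', one_mul]
  rw [mul_comm, ← hUT]
  simpa using hM.norm_trace_mul_mul_conjTranspose_le Bᴴ (U * T)

lemma IsHermitian.exists_mem_unitaryGroup_mul_eq_abs [DecidableEq n] {A : Matrix n n 𝕜}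
    (hA : A.IsHermitian) : ∃ U ∈ unitaryGroup n 𝕜, U * A = CFC.abs A := by
  let sign : ℝ → ℝ := fun x => if x < 0 then -1 else 1
  have hcont {f : ℝ → ℝ} : ContinuousOn f (spectrum ℝ A) := A.finite_real_spectrum.continuousOn _
  refine ⟨cfc sign A, ?_, ?_⟩
  · rw [mem_unitaryGroup_iff', (cfc_predicate sign A).star_eq, ← cfc_mul sign sign A hcont hcont,
      ← cfc_one ℝ A]
    refine cfc_congr fun x _ => ?_
    by_cases hx : x < 0 <;> simp [sign, hx]
  · rw [CFC.abs_eq_cfc_norm A]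
    nth_rw 2 [← cfc_id' ℝ A]
    rw [← cfc_mul sign (fun x => x) A hcont hcont]
    refine cfc_congr fun x _ => ?_
    by_cases hx : x < 0
    · simp [sign, hx, abs_of_neg hx]
    · simp [sign, hx, abs_of_nonneg (not_lt.mp hx)]

lemma PosSemidef.re_trace_abs_mul_mul_sub_le [DecidableEq n] {M S : Matrix n n 𝕜}
    (hM : M.PosSemidef) (hS : S.IsHermitian) :
    RCLike.re (CFC.abs (S * M * S - M)).trace ≤
      (√(RCLike.re (S * M * S).trace) + √(RCLike.re M.trace)) *
        √(RCLike.re ((S - 1) * M * (S - 1)).trace) := by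
  have hH : (S * M * S - M).IsHermitian := by
    simpa [hS.eq] using (hM.mul_mul_conjTranspose_same S).1.sub hM.1
  obtain ⟨U, hU, hUabs⟩ := hH.exists_mem_unitaryGroup_mul_eq_abs
  have h₁ := hM.norm_trace_mul_mul_le hU S (S - 1)
  have h₂ := hM.norm_trace_mul_mul_le hU (S - 1) 1
  simp only [hS.eq, conjTranspose_sub, conjTranspose_one, one_mul, mul_one] at h₁ h₂
  rw [← hUabs, show U * (S * M * S - M) = U * S * M * (S - 1) + U * (S - 1) * M by noncomm_ring,
    trace_add, map_add]
  linarith [RCLike.re_le_norm (U * S * M * (S - 1)).trace,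
    RCLike.re_le_norm (U * (S - 1) * M).trace]

end Matrix

lemma traceNorm_eq_re_trace_abs {n : ℕ} (M : Matrix (Fin n) (Fin n) ℂ) :
    traceNorm M = (CFC.abs M).trace.re := by
  rw [traceNorm, PosSemidef.sqrt_eq_cfcSqrt]; rfl

theorem gentle_operator_general {n : ℕ} (τ X : Matrix (Fin n) (Fin n) ℂ)
    (hτ : τ.PosSemidef) (hτtr : τ.trace.re ≤ 1)
    (hX : X.PosSemidef) (hX1 : (1 - X).PosSemidef)
    (ε : ℝ)
    (h : 1 - ε ≤ (τ * X).trace.re) :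
    traceNorm (hX.sqrt * τ * hX.sqrt - τ) ≤ 2 * Real.sqrt ε := by
  set S := hX.sqrt
  have hS : S = CFC.sqrt X := hX.sqrt_eq_cfcSqrt
  have hSτS : (S * τ * S).trace = (τ * X).trace := by
    rw [trace_mul_comm, ← mul_assoc, hS, CFC.sqrt_mul_sqrt_self X hX.nonneg, trace_mul_comm]
  have hτX : (τ * X).trace.re ≤ τ.trace.re := by
    simpa only [mul_one] using (Complex.le_def.mp (hτ.trace_mul_le_trace_mul hX1)).1
  have hq : ((S - 1) * τ * (S - 1)).trace.re ≤ ε := calc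
    _ = (τ * (1 - S) ^ 2).trace.re := by
      rw [trace_mul_comm, ← mul_assoc, trace_mul_comm, sq, ← neg_sub S 1, neg_mul_neg]
    _ ≤ (τ * (1 - X)).trace.re := Complex.le_def.mp
      (hτ.trace_mul_le_trace_mul (hS ▸ CFC.sq_one_sub_sqrt_le hX.nonneg hX1)) |>.1
    _ ≤ ε := by rw [mul_sub, mul_one, trace_sub, Complex.sub_re]; linarith
  have key := hτ.re_trace_abs_mul_mul_sub_le (hS ▸ (CFC.sqrt_nonneg X).posSemidef.1)
  simp only [hSτS, RCLike.re_to_complex] at key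
  rw [traceNorm_eq_re_trace_abs]
  calc _ ≤ _ := key
    _ ≤ (1 + 1) * √ε := by
      gcongr
      · exact Real.sqrt_le_one.mpr (hτX.trans hτtr)
      · exact Real.sqrt_le_one.mpr hτtr
    _ = 2 * √ε := by ring

/-- **The gentle (tender) operator lemma.** If `τ ≥ 0` with `tr τ ≤ 1`,
`0 ≤ X ≤ 1`, and `tr(τ X) ≥ 1 - ε`, then `‖√X τ √X - τ‖₁ ≤ 2 √ε`. -/
theorem gentle_operator {n : ℕ} (τ X : Matrix (Fin n) (Fin n) ℂ)
    (hτ : τ.PosSemidef) (hτtr : τ.trace.re ≤ 1)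
    (hX : X.PosSemidef) (hX1 : (1 - X).PosSemidef)
    (ε : ℝ) (hε : ε ∈ Set.Ioo (0 : ℝ) 1)
    (h : 1 - ε ≤ (τ * X).trace.re) :
    traceNorm (hX.sqrt * τ * hX.sqrt - τ) ≤ 2 * Real.sqrt ε :=
  gentle_operator_general τ X hτ hτtr hX hX1 ε h
end

section
/- Let S be a finite nonempty set, l and K positive integers, f : S^l → [0,1] a function, and ε, ν ∈ (0,1) such that |S|^l · 2^{−K(ν − 2ε)} < 1. If (1/l!) · ∑_{σ ∈ Sym(l)} f(σ(s^l)) ≥ 1 − ε holds for every s^l ∈ S^l, then there exist permutations σ_1, …, σ_K ∈ Sym(l) such that (1/K) · ∑_{k=1}^K f(σ_k(s^l)) ≥ 1 − ν for every s^l ∈ S^l. -/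
lemma exp_log2_mul_le {x : ℝ} (h0 : 0 ≤ x) (h1 : x ≤ 1) :
    Real.exp (Real.log 2 * x) ≤ 1 + x := by
  have h := convexOn_exp.2 (Set.mem_univ (0:ℝ)) (Set.mem_univ (Real.log 2))
    (by linarith : (0:ℝ) ≤ 1 - x) h0 (by ring)
  simp only [smul_eq_mul, mul_zero, Real.exp_zero, Real.exp_log two_pos] at h
  rw [show 0 + x * Real.log 2 = Real.log 2 * x by ring] at h
  linarith

lemma one_add_le_exp_log2 {ε : ℝ} (h0 : 0 ≤ ε) :
    1 + ε ≤ Real.exp (Real.log 2 * (2 * ε)) := by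
  have h1 : (0.6931471803 : ℝ) < Real.log 2 := Real.log_two_gt_d9
  have h2 := Real.add_one_le_exp (Real.log 2 * (2 * ε))
  nlinarith

/-- **Derandomized selection of permutations (elimination technique).**
If the uniform average of `f` over all permutations of every `s^l ∈ S^l` is at
least `1 - ε`, and `|S|^l · 2^{-K(ν - 2ε)} < 1`, then there exist `K` permutations
`σ_1, …, σ_K` whose empirical average satisfies `(1/K) ∑_k f(σ_k(s^l)) ≥ 1 - ν`
for every `s^l ∈ S^l`. -/
theorem derandomized_permutation_selection {S : Type*} [Fintype S] [Nonempty S]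
    {l K : ℕ} (hl : 0 < l) (hK : 0 < K)
    (f : (Fin l → S) → ℝ) (hf : ∀ s : Fin l → S, f s ∈ Set.Icc (0 : ℝ) 1)
    (ε ν : ℝ) (hε : ε ∈ Set.Ioo (0 : ℝ) 1) (hν : ν ∈ Set.Ioo (0 : ℝ) 1)
    (hsmall : (Fintype.card S : ℝ) ^ l * (2 : ℝ) ^ (-(K : ℝ) * (ν - 2 * ε)) < 1)
    (h : ∀ s : Fin l → S,
      1 - ε ≤ (1 / (Nat.factorial l : ℝ)) * ∑ σ : Equiv.Perm (Fin l), f (s ∘ σ)) :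
    ∃ σ : Fin K → Equiv.Perm (Fin l), ∀ s : Fin l → S,
      1 - ν ≤ (1 / (K : ℝ)) * ∑ k : Fin K, f (s ∘ σ k) := by
  classical
  by_contra hcon
  push_neg at hcon
  set E : ℝ → ℝ := fun x => Real.exp (Real.log 2 * x) with hE
  have hEpos : ∀ x, 0 < E x := fun x => Real.exp_pos _
  have hEadd : ∀ x y, E (x + y) = E x * E y := by
    intro x y; simp only [hE]; rw [← Real.exp_add]; ring_nf
  have hNpos : (0:ℝ) < (Nat.factorial l : ℝ) := by positivity
  set N : ℝ := (Nat.factorial l : ℝ) with hN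
  have hKpos : (0:ℝ) < (K:ℝ) := by positivity
  have hcardP : (Fintype.card (Equiv.Perm (Fin l)) : ℝ) = N := by
    simp [Fintype.card_perm, hN]
  -- step 1 : per-s bound on the sum over single permutations
  have hperm : ∀ s : Fin l → S,
      ∑ σ : Equiv.Perm (Fin l), E (1 - f (s ∘ σ)) ≤ E (2 * ε) * N := by
    intro s
    have h1 : ∑ σ : Equiv.Perm (Fin l), E (1 - f (s ∘ σ)) ≤
        ∑ σ : Equiv.Perm (Fin l), (2 - f (s ∘ σ)) := by
      apply Finset.sum_le_sum
      intro σ _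
      have hm := hf (s ∘ σ)
      have := exp_log2_mul_le (x := 1 - f (s ∘ σ)) (by linarith [hm.2]) (by linarith [hm.1])
      simpa [hE] using (by linarith : Real.exp (Real.log 2 * (1 - f (s ∘ σ))) ≤ 2 - f (s ∘ σ))
    have h2 : ∑ σ : Equiv.Perm (Fin l), (2 - f (s ∘ σ))
        = 2 * N - ∑ σ : Equiv.Perm (Fin l), f (s ∘ σ) := by
      rw [Finset.sum_sub_distrib, Finset.sum_const, Finset.card_univ]
      push_cast [hcardP]
      ring_nf
      rw [hcardP]
      ring
    have h3 : (1 - ε) * N ≤ ∑ σ : Equiv.Perm (Fin l), f (s ∘ σ) := by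
      have hth := h s
      rw [one_div] at hth
      refine le_trans (mul_le_mul_of_nonneg_right hth hNpos.le) ?_
      rw [mul_comm, ← mul_assoc, mul_inv_cancel₀ hNpos.ne', one_mul]
    have h4 : (1 + ε) ≤ E (2 * ε) := one_add_le_exp_log2 hε.1.le
    nlinarith [hEpos (2*ε)]
  -- step 2 : per-s bound on sum over K-tuples of the badness indicator
  have hbad : ∀ s : Fin l → S,
      ∑ τ : Fin K → Equiv.Perm (Fin l),
        (if (1 / (K : ℝ)) * ∑ k : Fin K, f (s ∘ τ k) < 1 - ν then (1:ℝ) else 0)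
      ≤ E (-(K * (ν - 2 * ε))) * N ^ K := by
    intro s
    have key : ∀ τ : Fin K → Equiv.Perm (Fin l),
        (if (1 / (K : ℝ)) * ∑ k : Fin K, f (s ∘ τ k) < 1 - ν then (1:ℝ) else 0)
        ≤ E (-(K * ν)) * ∏ k : Fin K, E (1 - f (s ∘ τ k)) := by
      intro τ
      have hprod : ∏ k : Fin K, E (1 - f (s ∘ τ k)) = E (∑ k : Fin K, (1 - f (s ∘ τ k))) := by
        simp only [hE]
        rw [Finset.mul_sum, Real.exp_sum]
      split_ifs with hb
      · rw [hprod, ← hEadd]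
        have hsum : (K:ℝ) * ν ≤ ∑ k : Fin K, (1 - f (s ∘ τ k)) := by
          have : ∑ k : Fin K, f (s ∘ τ k) < (1 - ν) * K := by
            have := (div_lt_iff₀ hKpos).mp (by rw [div_eq_inv_mul, ← one_div]; exact hb)
            linarith
          have hsum1 : ∑ k : Fin K, (1 - f (s ∘ τ k))
              = K - ∑ k : Fin K, f (s ∘ τ k) := by
            rw [Finset.sum_sub_distrib, Finset.sum_const, Finset.card_univ]
            simp
          rw [hsum1]; nlinarith
        have : 0 ≤ -(K * ν) + ∑ k : Fin K, (1 - f (s ∘ τ k)) := by linarith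
        have := Real.one_le_exp (by positivity : 0 ≤ Real.log 2 * (-(K * ν) + ∑ k : Fin K, (1 - f (s ∘ τ k))))
        simpa [hE] using this
      · positivity
    calc ∑ τ : Fin K → Equiv.Perm (Fin l),
          (if (1 / (K : ℝ)) * ∑ k : Fin K, f (s ∘ τ k) < 1 - ν then (1:ℝ) else 0)
        ≤ ∑ τ : Fin K → Equiv.Perm (Fin l),
            E (-(K * ν)) * ∏ k : Fin K, E (1 - f (s ∘ τ k)) :=
          Finset.sum_le_sum (fun τ _ => key τ)
      _ = E (-(K * ν)) * ∑ τ : Fin K → Equiv.Perm (Fin l), ∏ k : Fin K, E (1 - f (s ∘ τ k)) := by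
          rw [Finset.mul_sum]
      _ = E (-(K * ν)) * ∏ k : Fin K, ∑ σ : Equiv.Perm (Fin l), E (1 - f (s ∘ σ)) := by
          congr 1
          rw [Finset.prod_univ_sum]
          rw [Fintype.piFinset_univ]
      _ = E (-(K * ν)) * (∑ σ : Equiv.Perm (Fin l), E (1 - f (s ∘ σ))) ^ K := by
          rw [Finset.prod_const, Finset.card_univ, Fintype.card_fin]
      _ ≤ E (-(K * ν)) * (E (2 * ε) * N) ^ K := by
          apply mul_le_mul_of_nonneg_left _ (hEpos _).le
          apply pow_le_pow_left₀ _ (hperm s)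
          exact Finset.sum_nonneg (fun σ _ => (hEpos _).le)
      _ = E (-(K * (ν - 2 * ε))) * N ^ K := by
          rw [mul_pow]
          have : E (2 * ε) ^ K = E (K * (2 * ε)) := by
            simp only [hE]
            rw [← Real.exp_nat_mul]
            ring_nf
          rw [this, ← mul_assoc, ← hEadd]
          ring_nf
  -- step 3 : combine
  have hswap :
      ∑ τ : Fin K → Equiv.Perm (Fin l), ∑ s : Fin l → S,
        (if (1 / (K : ℝ)) * ∑ k : Fin K, f (s ∘ τ k) < 1 - ν then (1:ℝ) else 0)
      = ∑ s : Fin l → S, ∑ τ : Fin K → Equiv.Perm (Fin l),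
        (if (1 / (K : ℝ)) * ∑ k : Fin K, f (s ∘ τ k) < 1 - ν then (1:ℝ) else 0) :=
    Finset.sum_comm
  have hrpow : (2 : ℝ) ^ (-(K : ℝ) * (ν - 2 * ε)) = E (-(K * (ν - 2 * ε))) := by
    rw [Real.rpow_def_of_pos two_pos]
    simp only [hE]
    ring_nf
  have hupper : ∑ s : Fin l → S, ∑ τ : Fin K → Equiv.Perm (Fin l),
        (if (1 / (K : ℝ)) * ∑ k : Fin K, f (s ∘ τ k) < 1 - ν then (1:ℝ) else 0)
      < N ^ K := by
    calc ∑ s : Fin l → S, ∑ τ : Fin K → Equiv.Perm (Fin l),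
          (if (1 / (K : ℝ)) * ∑ k : Fin K, f (s ∘ τ k) < 1 - ν then (1:ℝ) else 0)
        ≤ ∑ _s : Fin l → S, E (-(K * (ν - 2 * ε))) * N ^ K :=
          Finset.sum_le_sum (fun s _ => hbad s)
      _ = (Fintype.card S : ℝ) ^ l * (E (-(K * (ν - 2 * ε))) * N ^ K) := by
          rw [Finset.sum_const, Finset.card_univ]
          simp [Fintype.card_fun]
      _ < 1 * N ^ K := by
          rw [← mul_assoc]
          apply mul_lt_mul_of_pos_right _ (by positivity)
          rw [← hrpow]
          exact hsmall
      _ = N ^ K := one_mul _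
  have hlower : (N : ℝ) ^ K ≤
      ∑ τ : Fin K → Equiv.Perm (Fin l), ∑ s : Fin l → S,
        (if (1 / (K : ℝ)) * ∑ k : Fin K, f (s ∘ τ k) < 1 - ν then (1:ℝ) else 0) := by
    have hcardT : ((Fintype.card (Fin K → Equiv.Perm (Fin l))) : ℝ) = N ^ K := by
      rw [Fintype.card_fun, Fintype.card_fin]
      push_cast [hcardP]
      rfl
    calc (N:ℝ) ^ K = ∑ _τ : Fin K → Equiv.Perm (Fin l), (1:ℝ) := by
          rw [Finset.sum_const, Finset.card_univ, nsmul_eq_mul, mul_one, hcardT]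
      _ ≤ _ := by
          apply Finset.sum_le_sum
          intro τ _
          obtain ⟨s, hs⟩ := hcon τ
          have : (if (1 / (K : ℝ)) * ∑ k : Fin K, f (s ∘ τ k) < 1 - ν then (1:ℝ) else 0) = 1 := by
            rw [if_pos hs]
          calc (1:ℝ) = _ := this.symm
            _ ≤ _ := Finset.single_le_sum (f := fun s => (if (1 / (K : ℝ)) * ∑ k : Fin K, f (s ∘ τ k) < 1 - ν then (1:ℝ) else 0)) (fun s _ => by positivity) (Finset.mem_univ s)
  rw [hswap] at hlower
  linarith
end
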